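/- arXiv:2001.10846 — 2 statements merged into one kernel-verified Lean document; each statement's English description precedes it below -/
import Mathlib

section
/- Let g(t) = |t−1| on [0,2]. Then for every β ∈ (0,1): (i) the Caputo fractional derivative of order 1−β with base point 0 satisfies ᶜ₀D^{1−β}g(t) = −t^β/Γ(β+1) for t ∈ (0,1] and ᶜ₀D^{1−β}g(t) = (2(t−1)^β − t^β)/Γ(β+1) for t ∈ (1,2]; (ii) the L¹ error satisfies E_{g,1}(β) = ‖ᶜ₀D^{1−β}g − g'‖_{L¹(0,2)} ≥ (Γ(β+2) − 3 + 2^{β+1})/Γ(β+2); and (iii) consequently liminf_{β→0⁺} E_{g,1}(β)/β ≥ Γ'(2) + 2·ln 2 > 0, so the Caputo L¹ error is not o(β) in general. -/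
open MeasureTheory Filter Set

/-- Caputo fractional derivative of order `α` with base point `a`,
expressed in terms of the a.e. derivative `g'`. -/
noncomputable def caputoD (a α : ℝ) (g' : ℝ → ℝ) (t : ℝ) : ℝ :=
  (1 / Real.Gamma (1 - α)) * ∫ τ in a..t, g' τ * (t - τ) ^ (-α)

/-- The a.e. derivative of `g(t) = |t - 1|`. -/
noncomputable def absDeriv (t : ℝ) : ℝ := if t ≤ 1 then -1 else 1

/-- Caputo L¹ error on `(0,2)` for `g(t) = |t-1|` at order `1-β`. -/
noncomputable def caputoAbsErr (β : ℝ) : ℝ :=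
  ∫ t in Set.Ioo (0 : ℝ) 2, |caputoD 0 (1 - β) absDeriv t - absDeriv t|

/-!
Since `g' = -1 + 2 · 𝟙_{(1,∞)}`, the Caputo derivative only involves the kernel integrals
`∫_a^b (t - τ)^(β-1) dτ = ((t - a)^β - (t - b)^β) / β`. The L¹ error dominates
`-∫_1^2 (ᶜ₀D^{1-β}g - g')`, which is computed in closed form; this lower bound `f(β)` has
`f(0) = 0` and `f'(0) = Γ'(2) + 2 log 2 = 1 - γ + 2 log 2 > 0`. Comparing with `g'` through
`Γ(1 + β) = 1 + O(β)` gives `E(β) = O(β)`, which is needed as well: a real `liminf` is only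
meaningful for a function that is bounded above along the filter.
-/

open Real Asymptotics Topology

section Kernel

variable {β : ℝ}

theorem integral_sub_rpow_sub_one (hβ : 0 < β) (a b t : ℝ) :
    ∫ τ in a..b, (t - τ) ^ (β - 1) = ((t - a) ^ β - (t - b) ^ β) / β := by
  rw [intervalIntegral.integral_comp_sub_left (· ^ (β - 1)),
    integral_rpow (Or.inl (by linarith)), sub_add_cancel]

theorem intervalIntegrable_sub_rpow_sub_one (hβ : 0 < β) (a b t : ℝ) :
    IntervalIntegrable (fun τ => (t - τ) ^ (β - 1)) volume a b := by
  have := (intervalIntegral.intervalIntegrable_rpow' (a := t - a) (b := t - b)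
    (by linarith : -1 < β - 1)).comp_sub_left t
  simpa using this

theorem integral_sub_rpow (hβ : -1 < β) (a b c : ℝ) :
    ∫ t in a..b, (t - c) ^ β = ((b - c) ^ (β + 1) - (a - c) ^ (β + 1)) / (β + 1) := by
  rw [intervalIntegral.integral_comp_sub_right (· ^ β), integral_rpow (Or.inl hβ)]

theorem Gamma_add_two (hβ : β + 1 ≠ 0) : Gamma (β + 2) = (β + 1) * Gamma (β + 1) := by
  rw [show β + 2 = β + 1 + 1 by ring, Gamma_add_one hβ]

theorem caputoD_one_sub (a : ℝ) (g' : ℝ → ℝ) (t : ℝ) :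
    caputoD a (1 - β) g' t = (∫ τ in a..t, g' τ * (t - τ) ^ (β - 1)) / Gamma β := by
  rw [caputoD, sub_sub_cancel, neg_sub, one_div, inv_mul_eq_div]

end Kernel

section AbsDeriv

variable {β t : ℝ}

theorem caputoD_absDeriv_of_le_one (hβ : 0 < β) (ht : t ≤ 1) :
    caputoD 0 (1 - β) absDeriv t = -(t ^ β) / Gamma (β + 1) := by
  have h : EqOn (fun τ => absDeriv τ * (t - τ) ^ (β - 1)) (fun τ => -(t - τ) ^ (β - 1))
      (uIoo 0 t) := fun τ hτ => by
    simp [absDeriv, hτ.2.le.trans (sup_le zero_le_one ht)]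
  rw [caputoD_one_sub, intervalIntegral.integral_congr_uIoo h, intervalIntegral.integral_neg,
    integral_sub_rpow_sub_one hβ, Gamma_add_one hβ.ne', sub_zero, sub_self, zero_rpow hβ.ne']
  field_simp
  ring

theorem caputoD_absDeriv_of_one_le (hβ : 0 < β) (ht : 1 ≤ t) :
    caputoD 0 (1 - β) absDeriv t = (2 * (t - 1) ^ β - t ^ β) / Gamma (β + 1) := by
  have h₀ : EqOn (fun τ => absDeriv τ * (t - τ) ^ (β - 1)) (fun τ => -(t - τ) ^ (β - 1))
      (uIoo 0 1) := fun τ hτ => by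
    simp [absDeriv, hτ.2.le.trans (sup_le zero_le_one le_rfl)]
  have h₁ : EqOn (fun τ => absDeriv τ * (t - τ) ^ (β - 1)) (fun τ => (t - τ) ^ (β - 1))
      (uIoo 1 t) := fun τ hτ => by
    simp [absDeriv, not_le.2 ((le_inf le_rfl ht).trans_lt hτ.1)]
  have hk := intervalIntegrable_sub_rpow_sub_one hβ
  rw [caputoD_one_sub, ← intervalIntegral.integral_add_adjacent_intervals
      ((hk 0 1 t).neg.congr_uIoo h₀.symm) ((hk 1 t t).congr_uIoo h₁.symm),
    intervalIntegral.integral_congr_uIoo h₀, intervalIntegral.integral_congr_uIoo h₁,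
    intervalIntegral.integral_neg, integral_sub_rpow_sub_one hβ, integral_sub_rpow_sub_one hβ,
    Gamma_add_one hβ.ne', sub_zero, sub_self, zero_rpow hβ.ne']
  field_simp
  ring

theorem caputoAbsErr_eq (hβ : 0 < β) :
    caputoAbsErr β = (∫ t in (0 : ℝ)..1, |1 - t ^ β / Gamma (β + 1)|) +
      ∫ t in (1 : ℝ)..2, |(2 * (t - 1) ^ β - t ^ β) / Gamma (β + 1) - 1| := by
  have h₀ : EqOn (fun t => |caputoD 0 (1 - β) absDeriv t - absDeriv t|)
      (fun t => |1 - t ^ β / Gamma (β + 1)|) (uIoo 0 1) := fun t ht => by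
    have ht1 : t ≤ 1 := ht.2.le.trans (sup_le zero_le_one le_rfl)
    simp only [caputoD_absDeriv_of_le_one hβ ht1, absDeriv, if_pos ht1]
    ring_nf
  have h₁ : EqOn (fun t => |caputoD 0 (1 - β) absDeriv t - absDeriv t|)
      (fun t => |(2 * (t - 1) ^ β - t ^ β) / Gamma (β + 1) - 1|) (uIoo 1 2) := fun t ht => by
    have ht1 : 1 < t := (le_inf le_rfl one_le_two).trans_lt ht.1
    simp only [caputoD_absDeriv_of_one_le hβ ht1.le, absDeriv, if_neg (not_le.2 ht1)]
  have hc : Continuous fun t : ℝ => t ^ β := continuous_rpow_const hβ.le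
  have hc₀ : Continuous fun t : ℝ => |1 - t ^ β / Gamma (β + 1)| := by fun_prop
  have hc₁ : Continuous fun t : ℝ => |(2 * (t - 1) ^ β - t ^ β) / Gamma (β + 1) - 1| := by
    fun_prop
  rw [caputoAbsErr, ← integral_Ioc_eq_integral_Ioo,
    ← intervalIntegral.integral_of_le zero_le_two,
    ← intervalIntegral.integral_add_adjacent_intervals
      ((hc₀.intervalIntegrable 0 1).congr_uIoo h₀.symm)
      ((hc₁.intervalIntegrable 1 2).congr_uIoo h₁.symm),
    intervalIntegral.integral_congr_uIoo h₀, intervalIntegral.integral_congr_uIoo h₁]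

theorem integral_two_mul_sub_rpow_div_sub_one (hβ : 0 < β) :
    ∫ t in (1 : ℝ)..2, ((2 * (t - 1) ^ β - t ^ β) / Gamma (β + 1) - 1) =
      (3 - 2 ^ (β + 1)) / Gamma (β + 2) - 1 := by
  have hc : Continuous fun t : ℝ => t ^ β := continuous_rpow_const hβ.le
  rw [intervalIntegral.integral_sub, intervalIntegral.integral_div, intervalIntegral.integral_sub,
    intervalIntegral.integral_const_mul, integral_sub_rpow (by linarith),
    integral_rpow (Or.inl (by linarith)), Gamma_add_two (by positivity)]
  · simp only [intervalIntegral.integral_const, show (2 : ℝ) - 1 = 1 by norm_num, one_rpow,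
      sub_self, zero_rpow (by positivity : β + 1 ≠ 0)]
    field_simp
    ring
  all_goals exact Continuous.intervalIntegrable (by fun_prop) _ _

theorem le_caputoAbsErr (hβ : 0 < β) :
    (Gamma (β + 2) - 3 + 2 ^ (β + 1)) / Gamma (β + 2) ≤ caputoAbsErr β := by
  have hΓ : 0 < Gamma (β + 2) := Gamma_pos_of_pos (by linarith)
  rw [caputoAbsErr_eq hβ]
  calc _ = -∫ t in (1 : ℝ)..2, ((2 * (t - 1) ^ β - t ^ β) / Gamma (β + 1) - 1) := by
        rw [integral_two_mul_sub_rpow_div_sub_one hβ]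
        field_simp
        ring
    _ ≤ ∫ t in (1 : ℝ)..2, |(2 * (t - 1) ^ β - t ^ β) / Gamma (β + 1) - 1| :=
        (neg_le_abs _).trans (intervalIntegral.abs_integral_le_integral_abs one_le_two)
    _ ≤ _ := le_add_of_nonneg_left
        (intervalIntegral.integral_nonneg zero_le_one fun _ _ => abs_nonneg _)

theorem integral_abs_one_sub_rpow_div_le (hβ : 0 < β) :
    ∫ t in (0 : ℝ)..1, |1 - t ^ β / Gamma (β + 1)| ≤
      (|Gamma (β + 1) - 1| + β / (β + 1)) / Gamma (β + 1) := by
  have hΓ : 0 < Gamma (β + 1) := Gamma_pos_of_pos (by linarith)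
  have hc : Continuous fun t : ℝ => t ^ β := continuous_rpow_const hβ.le
  have hbound : ∀ t ∈ Icc (0 : ℝ) 1, |1 - t ^ β / Gamma (β + 1)| ≤
      (|Gamma (β + 1) - 1| + (1 - t ^ β)) / Gamma (β + 1) := fun t ht => by
    have : t ^ β ≤ 1 := rpow_le_one ht.1 ht.2 hβ.le
    rw [show 1 - t ^ β / Gamma (β + 1) = ((Gamma (β + 1) - 1) + (1 - t ^ β)) / Gamma (β + 1) by
      field_simp; ring, abs_div, abs_of_pos hΓ]
    gcongr
    exact (abs_add_le _ _).trans_eq (by rw [abs_of_nonneg (sub_nonneg.2 this)])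
  refine (intervalIntegral.integral_mono_on zero_le_one
    ((by fun_prop : Continuous _).intervalIntegrable _ _)
    ((by fun_prop : Continuous _).intervalIntegrable _ _) hbound).trans_eq ?_
  rw [intervalIntegral.integral_div, intervalIntegral.integral_add, intervalIntegral.integral_sub,
    integral_rpow (Or.inl (by linarith))]
  · simp only [intervalIntegral.integral_const, one_rpow, zero_rpow (by positivity : β + 1 ≠ 0)]
    field_simp
    ring
  all_goals exact Continuous.intervalIntegrable (by fun_prop) _ _

theorem integral_abs_two_mul_sub_rpow_div_le (hβ : 0 < β) :
    ∫ t in (1 : ℝ)..2, |(2 * (t - 1) ^ β - t ^ β) / Gamma (β + 1) - 1| ≤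
      (|Gamma (β + 1) - 1| + (2 ^ (β + 1) - 2 + β) / (β + 1)) / Gamma (β + 1) := by
  have hΓ : 0 < Gamma (β + 1) := Gamma_pos_of_pos (by linarith)
  have hc : Continuous fun t : ℝ => t ^ β := continuous_rpow_const hβ.le
  have hbound : ∀ t ∈ Icc (1 : ℝ) 2, |(2 * (t - 1) ^ β - t ^ β) / Gamma (β + 1) - 1| ≤
      (|Gamma (β + 1) - 1| + 2 * (1 - (t - 1) ^ β) + (t ^ β - 1)) / Gamma (β + 1) :=
    fun t ht => by
    have h₁ : (t - 1) ^ β ≤ 1 := rpow_le_one (by linarith [ht.1]) (by linarith [ht.2]) hβ.le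
    have h₂ : 1 ≤ t ^ β := one_le_rpow ht.1 hβ.le
    rw [show (2 * (t - 1) ^ β - t ^ β) / Gamma (β + 1) - 1 =
      ((1 - Gamma (β + 1)) - 2 * (1 - (t - 1) ^ β) - (t ^ β - 1)) / Gamma (β + 1) by
      field_simp; ring, abs_div, abs_of_pos hΓ, abs_sub_comm (Gamma _)]
    gcongr
    exact abs_le.2 ⟨by linarith [neg_abs_le (1 - Gamma (β + 1))],
      by linarith [le_abs_self (1 - Gamma (β + 1))]⟩
  refine (intervalIntegral.integral_mono_on one_le_two
    ((by fun_prop : Continuous _).intervalIntegrable _ _)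
    ((by fun_prop : Continuous _).intervalIntegrable _ _) hbound).trans_eq ?_
  rw [intervalIntegral.integral_div, intervalIntegral.integral_add, intervalIntegral.integral_add,
    intervalIntegral.integral_const_mul, intervalIntegral.integral_sub,
    intervalIntegral.integral_sub, integral_sub_rpow (by linarith),
    integral_rpow (Or.inl (by linarith))]
  · simp only [intervalIntegral.integral_const, show (2 : ℝ) - 1 = 1 by norm_num, one_rpow,
      sub_self, zero_rpow (by positivity : β + 1 ≠ 0)]
    field_simp
    ring
  all_goals exact Continuous.intervalIntegrable (by fun_prop) _ _

theorem caputoAbsErr_le (hβ : 0 < β) :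
    caputoAbsErr β ≤
      (2 * |Gamma (β + 1) - 1| + (2 ^ (β + 1) - 2 + 2 * β) / (β + 1)) / Gamma (β + 1) := by
  rw [caputoAbsErr_eq hβ]
  refine (add_le_add (integral_abs_one_sub_rpow_div_le hβ)
    (integral_abs_two_mul_sub_rpow_div_le hβ)).trans_eq ?_
  field_simp
  ring

end AbsDeriv

theorem le_liminf_div_of_hasDerivAt {f g : ℝ → ℝ} {L : ℝ} (hf : HasDerivAt f L 0)
    (hf0 : f 0 = 0) (hfg : ∀ᶠ x in 𝓝[>] 0, f x ≤ g x) (hg : g =O[𝓝[>] 0] id) :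
    L ≤ liminf (fun x => g x / x) (𝓝[>] 0) := by
  have hslope : Tendsto (fun x => f x / x) (𝓝[>] 0) (𝓝 L) := by
    simpa [hf0, div_eq_inv_mul] using hf.tendsto_slope_zero_right
  obtain ⟨C, hC⟩ := hg.bound
  have hpos : ∀ᶠ x in 𝓝[>] (0 : ℝ), 0 < x := self_mem_nhdsWithin
  rw [← hslope.liminf_eq]
  refine liminf_le_liminf ?_ hslope.isBoundedUnder_ge
    (isCoboundedUnder_ge_of_eventually_le _ (x := C) ?_)
  · filter_upwards [hfg, hpos] with x hx h0 using div_le_div_of_nonneg_right hx h0.le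
  · filter_upwards [hC, hpos] with x hx h0
    rw [div_le_iff₀ h0]
    simpa [abs_of_pos h0] using (le_abs_self _).trans hx

theorem hasDerivAt_Gamma_add {s : ℝ} (hs : 0 < s) :
    HasDerivAt (fun β => Gamma (β + s)) (deriv Gamma s) 0 := by
  refine HasDerivAt.comp_add_const 0 s ?_
  rw [zero_add]
  exact (differentiableAt_Gamma fun m => by linarith [(m.cast_nonneg : (0 : ℝ) ≤ m)]).hasDerivAt

theorem caputoAbsErr_isBigO : caputoAbsErr =O[𝓝[>] 0] id := by
  have hΓ := hasDerivAt_Gamma_add one_pos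
  have hΓ₁ : (fun β => |Gamma (β + 1) - 1|) =O[𝓝 0] id := by
    have h := hΓ.isBigO_sub.norm_left
    simp only [zero_add, Gamma_one, sub_zero, Real.norm_eq_abs] at h
    exact h
  have hψ : (fun β : ℝ => (2 ^ (β + 1) - 2 + 2 * β) / (β + 1)) =O[𝓝 0] id := by
    have hd : DifferentiableAt ℝ (fun β : ℝ => (2 ^ (β + 1) - 2 + 2 * β) / (β + 1)) 0 := by
      fun_prop (disch := norm_num)
    have h := hd.hasDerivAt.isBigO_sub
    norm_num at h
    exact h
  have hinv : (fun β => (Gamma (β + 1))⁻¹) =O[𝓝 0] (fun _ => (1 : ℝ)) :=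
    (hΓ.continuousAt.tendsto.inv₀ (by simp)).isBigO_one ℝ
  have hu := (((hΓ₁.const_mul_left 2).add hψ).mul hinv).mono (nhdsWithin_le_nhds (s := Ioi 0))
  simp only [mul_one] at hu
  refine (IsBigO.of_bound' ?_).trans hu
  filter_upwards [self_mem_nhdsWithin] with β hβ
  have hE : 0 ≤ caputoAbsErr β := setIntegral_nonneg measurableSet_Ioo fun _ _ => abs_nonneg _
  rw [norm_of_nonneg hE, ← div_eq_mul_inv]
  exact (caputoAbsErr_le hβ).trans (le_abs_self _)

theorem hasDerivAt_Gamma_sub_three_add_two_rpow_div :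
    HasDerivAt (fun β => (Gamma (β + 2) - 3 + 2 ^ (β + 1)) / Gamma (β + 2))
      (deriv Gamma 2 + 2 * Real.log 2) 0 := by
  have hΓ := hasDerivAt_Gamma_add two_pos
  have hpow := ((hasDerivAt_id' (0 : ℝ)).add_const 1).const_rpow two_pos
  refine (((hΓ.sub_const 3).add hpow).div hΓ (by norm_num)).congr_deriv ?_
  norm_num
  ring

theorem deriv_Gamma_two : deriv Gamma 2 = 1 - eulerMascheroniConstant := by
  have h := deriv_Gamma_nat 1
  norm_num [harmonic] at h
  linarith

theorem deriv_Gamma_two_add_two_mul_log_two_pos : 0 < deriv Gamma 2 + 2 * Real.log 2 := by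
  rw [deriv_Gamma_two]
  linarith [eulerMascheroniConstant_lt_two_thirds, log_pos one_lt_two]

/-- For `g(t) = |t-1|` on `[0,2]`: the explicit formula for `ᶜ₀D^{1-β}g` on
`(0,1]` and `(1,2]`, the lower bound
`E_{g,1}(β) ≥ (Γ(β+2) - 3 + 2^{β+1})/Γ(β+2)`, and consequently
`liminf_{β→0⁺} E_{g,1}(β)/β ≥ Γ'(2) + 2 ln 2 > 0`. -/
theorem caputo_abs_error :
    (∀ β ∈ Set.Ioo (0 : ℝ) 1,
        (∀ t ∈ Set.Ioc (0 : ℝ) 1,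
            caputoD 0 (1 - β) absDeriv t = -(t ^ β) / Real.Gamma (β + 1)) ∧
        (∀ t ∈ Set.Ioc (1 : ℝ) 2,
            caputoD 0 (1 - β) absDeriv t =
              (2 * (t - 1) ^ β - t ^ β) / Real.Gamma (β + 1)) ∧
        (Real.Gamma (β + 2) - 3 + 2 ^ (β + 1)) / Real.Gamma (β + 2) ≤
          caputoAbsErr β) ∧
    deriv Real.Gamma 2 + 2 * Real.log 2 ≤
      Filter.liminf (fun β : ℝ => caputoAbsErr β / β) (nhdsWithin 0 (Set.Ioi 0)) ∧
    0 < deriv Real.Gamma 2 + 2 * Real.log 2 := by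
  refine ⟨fun β hβ => ⟨fun t ht => caputoD_absDeriv_of_le_one hβ.1 ht.2,
    fun t ht => caputoD_absDeriv_of_one_le hβ.1 ht.1.le, le_caputoAbsErr hβ.1⟩, ?_,
    deriv_Gamma_two_add_two_mul_log_two_pos⟩
  refine le_liminf_div_of_hasDerivAt hasDerivAt_Gamma_sub_three_add_two_rpow_div (by norm_num) ?_
    caputoAbsErr_isBigO
  filter_upwards [self_mem_nhdsWithin] with β hβ using le_caputoAbsErr hβ
end

section
/- Let m ∈ ℕ with m ≥ 2, let 0 < T ≤ m−1, let g(t) = t^m on [0,T], and let β ∈ (0,1). Then the L¹ errors of the Caputo–Fabrizio and Caputo fractional derivatives of order 1−β with base point 0 are given explicitly by: (i) ‖ᶜᶠ₀D^{1−β}g − g'‖_{L¹(0,T)} = (T^m/(1−β))·(Γ(m+1)·E_{1,m+1}(−((1−β)/β)·T) − β), where E_{1,m+1} is the Mittag-Leffler function; and (ii) ‖ᶜ₀D^{1−β}g − g'‖_{L¹(0,T)} = T^m·(Γ(m+β+1) − Γ(m+1)·T^β)/Γ(m+β+1). -/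
open MeasureTheory Filter Set

/-- Caputo–Fabrizio fractional derivative of order `α` with base point `a`,
expressed in terms of the derivative `g'`. -/
noncomputable def cfD (a α : ℝ) (g' : ℝ → ℝ) (t : ℝ) : ℝ :=
  (1 / (1 - α)) * ∫ τ in a..t, g' τ * Real.exp (-(α / (1 - α)) * (t - τ))

/-- Mittag-Leffler function `E_{ρ,ω}(t) = ∑_{k≥0} t^k / Γ(ρk + ω)`. -/
noncomputable def mittagLeffler (ρ ω t : ℝ) : ℝ :=
  ∑' k : ℕ, t ^ k / Real.Gamma (ρ * (k : ℝ) + ω)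

/-!
For `0 < t ≤ m - 1` both fractional derivatives of `g(t) = t^m` lie below `g'(t) = m t^(m-1)`,
so the absolute values drop out and each error is `∫₀ᵀ g' - ∫₀ᵀ D g = T^m - ∫₀ᵀ D g`.

The Caputo derivative of `t^m` is a Beta integral, `Γ(m+1)/Γ(m+β) · t^(m+β-1)`; it stays below
`m t^(m-1)` by Wendel's inequality `Γ(m) t^β ≤ Γ(m+β)` for `t ≤ m+β-1`.

The Caputo–Fabrizio derivative is `β⁻¹ Φ` with `Φ(t) = ∫₀ᵗ g'(τ) e^(-l(t-τ)) dτ`, `l = (1-β)/β`.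
Since `Φ' = g' - lΦ` and `Φ(0) = 0`, we get `∫₀ᵀ Φ = (T^m - Φ(T))/l`, and expanding the
exponential termwise into Beta integrals gives `Φ(T) = Γ(m+1) T^m E_{1,m+1}(-lT)`. The sign comes
from `τ^n ≤ t^n e^(τ-t)` for `0 ≤ τ ≤ t ≤ n`, which gives `Φ(t) ≤ g'(t)/(l+1) = β g'(t)`.
-/

open Real intervalIntegral

theorem integral_rpow_mul_sub_rpow {a b t : ℝ} (ha : 0 < a) (hb : 0 < b) (ht : 0 < t) :
    ∫ τ in (0 : ℝ)..t, τ ^ (a - 1) * (t - τ) ^ (b - 1) =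
      Gamma a * Gamma b / Gamma (a + b) * t ^ (a + b - 1) := by
  have hC := Complex.betaIntegral_scaled a b ht
  rw [Complex.betaIntegral_eq_Gamma_mul_div _ _ (by simpa) (by simpa), ← Complex.ofReal_add,
    Complex.Gamma_ofReal, Complex.Gamma_ofReal, Complex.Gamma_ofReal] at hC
  apply Complex.ofReal_injective
  rw [← intervalIntegral.integral_ofReal, mul_comm]
  push_cast
  rw [Complex.ofReal_cpow ht.le]
  push_cast
  rw [← Complex.ofReal_add, ← hC]
  refine integral_congr fun τ hτ => ?_
  rw [uIcc_of_le ht.le] at hτ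
  rw [Complex.ofReal_cpow hτ.1, Complex.ofReal_cpow (sub_nonneg.2 hτ.2)]
  push_cast
  ring

theorem Real.Gamma_mul_rpow_le_Gamma_add {x β : ℝ} (hx : 0 < x + β - 1) (hβ0 : 0 < β)
    (hβ1 : β < 1) : Gamma x * (x + β - 1) ^ β ≤ Gamma (x + β) := by
  have hΓ : 0 < Gamma (x + β) := Gamma_pos_of_pos (by linarith)
  have hrec : Gamma (x + β - 1) = Gamma (x + β) / (x + β - 1) := by
    rw [eq_div_iff hx.ne', mul_comm, ← Gamma_add_one hx.ne', sub_add_cancel]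
  have hconv := Gamma_mul_add_mul_le_rpow_Gamma_mul_rpow_Gamma hx (by linarith : 0 < x + β) hβ0
    (sub_pos.2 hβ1) (add_sub_cancel β 1)
  rw [show β * (x + β - 1) + (1 - β) * (x + β) = x by ring, hrec,
    div_rpow hΓ.le hx.le, div_mul_eq_mul_div, ← rpow_add hΓ, add_sub_cancel, rpow_one,
    le_div_iff₀ (rpow_pos_of_pos hx β)] at hconv
  exact hconv

theorem pow_pred_eq_rpow {m : ℕ} (hm : m ≠ 0) (x : ℝ) : x ^ (m - 1) = x ^ ((m : ℝ) - 1) := by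
  rw [← Nat.cast_pred (Nat.pos_of_ne_zero hm), rpow_natCast]

theorem integral_natCast_mul_pow_pred (m : ℕ) (a b : ℝ) :
    ∫ x in a..b, (m : ℝ) * x ^ (m - 1) = b ^ m - a ^ m :=
  integral_eq_sub_of_hasDerivAt (fun x _ => hasDerivAt_pow m x)
    (Continuous.intervalIntegrable (by fun_prop) a b)

theorem setIntegral_Ioo_abs_sub_of_le {f g : ℝ → ℝ} {T : ℝ} (hT : 0 ≤ T)
    (hf : IntervalIntegrable f volume 0 T) (hg : IntervalIntegrable g volume 0 T)
    (hfg : ∀ t ∈ Ioo 0 T, f t ≤ g t) :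
    ∫ t in Ioo 0 T, |f t - g t| = (∫ t in 0..T, g t) - ∫ t in 0..T, f t := by
  rw [← integral_sub hg hf, integral_of_le hT, integral_Ioc_eq_integral_Ioo]
  refine setIntegral_congr_fun measurableSet_Ioo fun t ht => ?_
  rw [abs_of_nonpos (sub_nonpos.2 (hfg t ht)), neg_sub]

theorem caputoD_deriv_pow {m : ℕ} (hm : m ≠ 0) {β t : ℝ} (hβ : 0 < β) (ht : 0 < t) :
    caputoD 0 (1 - β) (fun τ => (m : ℝ) * τ ^ (m - 1)) t =
      Gamma (m + 1) / Gamma (m + β) * t ^ ((m : ℝ) + β - 1) := by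
  have hm0 : (0 : ℝ) < m := by positivity
  simp_rw [caputoD, sub_sub_cancel, neg_sub, pow_pred_eq_rpow hm, mul_assoc,
    intervalIntegral.integral_const_mul, integral_rpow_mul_sub_rpow hm0 hβ ht,
    Gamma_add_one hm0.ne']
  field_simp

theorem Gamma_div_Gamma_mul_rpow_le {m : ℕ} {β t : ℝ} (hβ0 : 0 < β) (hβ1 : β < 1) (ht0 : 0 < t)
    (ht : t ≤ m + β - 1) :
    Gamma (m + 1) / Gamma (m + β) * t ^ ((m : ℝ) + β - 1) ≤ m * t ^ (m - 1) := by
  have hm0 : (0 : ℝ) < m := by linarith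
  have hΓ : 0 < Gamma (m + β) := Gamma_pos_of_pos (by linarith)
  have hWendel : Gamma m * t ^ β ≤ Gamma (m + β) :=
    calc Gamma m * t ^ β ≤ Gamma m * (m + β - 1) ^ β := by gcongr
      _ ≤ Gamma (m + β) := Gamma_mul_rpow_le_Gamma_add (by linarith) hβ0 hβ1
  rw [pow_pred_eq_rpow (by exact_mod_cast hm0.ne'), Gamma_add_one hm0.ne',
    show (m : ℝ) + β - 1 = (m - 1) + β by ring, rpow_add ht0, div_mul_eq_mul_div, div_le_iff₀ hΓ]
  calc m * Gamma m * (t ^ ((m : ℝ) - 1) * t ^ β)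
      = m * t ^ ((m : ℝ) - 1) * (Gamma m * t ^ β) := by ring
    _ ≤ m * t ^ ((m : ℝ) - 1) * Gamma (m + β) := by gcongr

theorem integral_abs_caputoD_sub_deriv_pow {m : ℕ} {β T : ℝ} (hβ0 : 0 < β) (hβ1 : β < 1)
    (hT0 : 0 < T) (hT : T ≤ m + β - 1) :
    ∫ t in Ioo 0 T, |caputoD 0 (1 - β) (fun τ => (m : ℝ) * τ ^ (m - 1)) t - m * t ^ (m - 1)| =
      T ^ m * (Gamma (m + β + 1) - Gamma (m + 1) * T ^ β) / Gamma (m + β + 1) := by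
  have hm0 : (0 : ℝ) < m := by linarith
  rw [setIntegral_congr_fun measurableSet_Ioo fun t ht => by
      rw [caputoD_deriv_pow (by exact_mod_cast hm0.ne') hβ0 ht.1],
    setIntegral_Ioo_abs_sub_of_le hT0.le
      ((intervalIntegral.intervalIntegrable_rpow' (by linarith)).const_mul _)
      (Continuous.intervalIntegrable (by fun_prop) _ _)
      fun t ht => Gamma_div_Gamma_mul_rpow_le hβ0 hβ1 ht.1 (by linarith [ht.2]),
    integral_natCast_mul_pow_pred, intervalIntegral.integral_const_mul,
    integral_rpow (Or.inl (by linarith)), sub_add_cancel,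
    Gamma_add_one (s := m + β) (by positivity), zero_rpow (by positivity),
    zero_pow (by exact_mod_cast hm0.ne'), rpow_add hT0, rpow_natCast]
  field_simp
  ring

theorem integral_exp_neg_mul_sub {μ : ℝ} (hμ : μ ≠ 0) (t : ℝ) :
    ∫ τ in (0 : ℝ)..t, exp (-μ * (t - τ)) = (1 - exp (-μ * t)) / μ := by
  rw [intervalIntegral.integral_comp_sub_left (fun x => exp (-μ * x)), sub_self, sub_zero,
    intervalIntegral.integral_comp_mul_left (fun x => exp x) (neg_ne_zero.2 hμ), integral_exp,
    mul_zero, exp_zero, smul_eq_mul]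
  field_simp
  ring

theorem pow_le_pow_mul_exp_sub {n : ℕ} {τ t : ℝ} (hτ : 0 ≤ τ) (hτt : τ ≤ t) (htn : t ≤ n) :
    τ ^ n ≤ t ^ n * exp (τ - t) := by
  rcases (hτ.trans hτt).eq_or_lt with rfl | ht
  · simp [le_antisymm hτt hτ]
  have hnt : 1 ≤ n / t := (one_le_div ht).2 htn
  calc τ ^ n = t ^ n * (τ / t) ^ n := by rw [← mul_pow, mul_div_cancel₀ _ ht.ne']
    _ ≤ t ^ n * exp (τ / t - 1) ^ n := by
        gcongr
        linarith [add_one_le_exp (τ / t - 1)]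
    _ = t ^ n * exp (n / t * (τ - t)) := by
        rw [← exp_nat_mul]
        congr 2
        field_simp
    _ ≤ t ^ n * exp (τ - t) := by
        gcongr
        nlinarith

noncomputable def expConv (l : ℝ) (f : ℝ → ℝ) (t : ℝ) : ℝ :=
  ∫ τ in (0 : ℝ)..t, f τ * exp (-l * (t - τ))

theorem cfD_eq_expConv (β : ℝ) (g : ℝ → ℝ) (t : ℝ) :
    cfD 0 (1 - β) g t = β⁻¹ * expConv ((1 - β) / β) g t := by
  rw [cfD, expConv, sub_sub_cancel, one_div]

theorem expConv_const_mul (l c : ℝ) (f : ℝ → ℝ) (t : ℝ) :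
    expConv l (fun τ => c * f τ) t = c * expConv l f t := by
  simp only [expConv, mul_assoc, intervalIntegral.integral_const_mul]

theorem hasDerivAt_expConv {f : ℝ → ℝ} (hf : Continuous f) (l t : ℝ) :
    HasDerivAt (expConv l f) (f t - l * expConv l f t) t := by
  have hfac : expConv l f = fun t => exp (-l * t) * ∫ τ in (0 : ℝ)..t, f τ * exp (l * τ) := by
    funext t
    rw [expConv, ← intervalIntegral.integral_const_mul]
    refine integral_congr fun τ _ => ?_
    rw [show -l * (t - τ) = -l * t + l * τ by ring, exp_add]
    ring
  have hexp : HasDerivAt (fun t => exp (-l * t)) (-l * exp (-l * t)) t := by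
    simpa [mul_comm] using ((hasDerivAt_id t).const_mul (-l)).exp
  have hint : HasDerivAt (fun u => ∫ τ in (0 : ℝ)..u, f τ * exp (l * τ)) (f t * exp (l * t)) t :=
    (Continuous.integral_hasStrictDerivAt (by fun_prop) 0 t).hasDerivAt
  rw [hfac]
  refine (hexp.mul hint).congr_deriv ?_
  rw [show exp (-l * t) * (f t * exp (l * t)) = f t * exp (-l * t + l * t) by rw [exp_add]; ring]
  simp only [neg_mul, neg_add_cancel, exp_zero]
  ring

theorem continuous_expConv {f : ℝ → ℝ} (hf : Continuous f) (l : ℝ) : Continuous (expConv l f) :=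
  continuous_iff_continuousAt.2 fun t => (hasDerivAt_expConv hf l t).continuousAt

theorem integral_expConv {f : ℝ → ℝ} (hf : Continuous f) {l : ℝ} (hl : l ≠ 0) (T : ℝ) :
    ∫ t in (0 : ℝ)..T, expConv l f t = ((∫ t in (0 : ℝ)..T, f t) - expConv l f T) / l := by
  have hlΦ : IntervalIntegrable (fun t => l * expConv l f t) volume 0 T :=
    ((continuous_expConv hf l).intervalIntegrable 0 T).const_mul l
  have hFTC := integral_eq_sub_of_hasDerivAt (fun t _ => hasDerivAt_expConv hf l t)
    ((hf.intervalIntegrable 0 T).sub hlΦ)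
  rw [integral_sub (hf.intervalIntegrable 0 T) hlΦ, intervalIntegral.integral_const_mul,
    show expConv l f 0 = 0 from integral_same, sub_zero] at hFTC
  rw [eq_div_iff hl, ← hFTC]
  ring

theorem expConv_pow_le {n : ℕ} {l t : ℝ} (hl : 0 ≤ l) (ht : 0 < t) (htn : t ≤ n) :
    expConv l (fun τ => τ ^ n) t ≤ t ^ n / (l + 1) := by
  have hpt : ∀ τ ∈ Icc 0 t, τ ^ n * exp (-l * (t - τ)) ≤ t ^ n * exp (-(l + 1) * (t - τ)) := by
    intro τ hτ
    calc τ ^ n * exp (-l * (t - τ)) ≤ t ^ n * exp (τ - t) * exp (-l * (t - τ)) := by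
          gcongr
          exact pow_le_pow_mul_exp_sub hτ.1 hτ.2 htn
      _ = t ^ n * exp (-(l + 1) * (t - τ)) := by rw [mul_assoc, ← exp_add]; ring_nf
  calc expConv l (fun τ => τ ^ n) t
      ≤ ∫ τ in (0 : ℝ)..t, t ^ n * exp (-(l + 1) * (t - τ)) :=
        integral_mono_on ht.le (Continuous.intervalIntegrable (by fun_prop) _ _)
          (Continuous.intervalIntegrable (by fun_prop) _ _) hpt
    _ = t ^ n * ((1 - exp (-(l + 1) * t)) / (l + 1)) := by
        rw [intervalIntegral.integral_const_mul, integral_exp_neg_mul_sub (by positivity)]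
    _ ≤ t ^ n / (l + 1) := by
        rw [mul_div_assoc']
        gcongr ?_ / _
        exact mul_le_of_le_one_right (by positivity) (by linarith [exp_pos (-(l + 1) * t)])

theorem expConv_deriv_pow {m : ℕ} (hm : m ≠ 0) (l : ℝ) {T : ℝ} (hT : 0 < T) :
    expConv l (fun τ => (m : ℝ) * τ ^ (m - 1)) T =
      T ^ m * (Gamma (m + 1) * mittagLeffler 1 (m + 1) (-l * T)) := by
  have hm0 : (0 : ℝ) < m := by positivity
  set F : ℕ → ℝ → ℝ := fun k τ => m * τ ^ (m - 1) * ((-l * (T - τ)) ^ k / k.factorial)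
  have hterm : ∀ k : ℕ, ∫ τ in (0 : ℝ)..T, F k τ =
      T ^ m * (Gamma (m + 1) * ((-l * T) ^ k / Gamma (1 * k + (m + 1)))) := by
    intro k
    calc ∫ τ in (0 : ℝ)..T, F k τ
        = m * (-l) ^ k / k.factorial *
            ∫ τ in (0 : ℝ)..T, τ ^ ((m : ℝ) - 1) * (T - τ) ^ ((k + 1 : ℝ) - 1) := by
          rw [← intervalIntegral.integral_const_mul]
          refine integral_congr fun τ _ => ?_
          simp only [F, pow_pred_eq_rpow hm, add_sub_cancel_right, rpow_natCast, mul_pow]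
          ring
      _ = _ := by
          rw [integral_rpow_mul_sub_rpow hm0 (by positivity) hT, Gamma_nat_eq_factorial,
            Gamma_add_one hm0.ne', show (m : ℝ) + (k + 1) - 1 = m + k by ring, rpow_add hT,
            rpow_natCast, rpow_natCast, show (1 : ℝ) * k + (m + 1) = m + (k + 1) by ring]
          field_simp
          ring
  have hsum : HasSum (fun k => ∫ τ in (0 : ℝ)..T, F k τ)
      (expConv l (fun τ => (m : ℝ) * τ ^ (m - 1)) T) := by
    refine intervalIntegral.hasSum_integral_of_dominated_convergence
      (fun k _ => m * T ^ (m - 1) * ((|l| * T) ^ k / k.factorial))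
      (fun k => (by fun_prop : Continuous (F k)).aestronglyMeasurable)
      (fun k => Eventually.of_forall fun τ hτ => ?_)
      (Eventually.of_forall fun τ _ => (summable_pow_div_factorial _).mul_left _)
      intervalIntegrable_const
      (Eventually.of_forall fun τ _ => ?_)
    · rw [uIoc_of_le hT.le] at hτ
      simp only [F, norm_mul, norm_div, norm_pow, Real.norm_eq_abs, abs_neg, Nat.abs_cast,
        abs_of_pos hτ.1, abs_of_nonneg (sub_nonneg.2 hτ.2)]
      have hTτ : 0 ≤ T - τ := sub_nonneg.2 hτ.2
      gcongr <;> linarith [hτ.1, hτ.2]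
    · rw [exp_eq_exp_ℝ]
      exact (NormedSpace.expSeries_div_hasSum_exp (-l * (T - τ))).mul_left _
  rw [← hsum.tsum_eq, funext hterm, tsum_mul_left, tsum_mul_left, mittagLeffler]

theorem integral_abs_cfD_sub_deriv_pow {m : ℕ} {β T : ℝ} (hβ0 : 0 < β) (hβ1 : β < 1)
    (hT0 : 0 < T) (hT : T ≤ m - 1) :
    ∫ t in Ioo 0 T, |cfD 0 (1 - β) (fun τ => (m : ℝ) * τ ^ (m - 1)) t - m * t ^ (m - 1)| =
      T ^ m / (1 - β) * (Gamma (m + 1) * mittagLeffler 1 (m + 1) (-((1 - β) / β) * T) - β) := by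
  have hm : m ≠ 0 := by rintro rfl; norm_num at hT; linarith
  have hl : 0 < (1 - β) / β := div_pos (sub_pos.2 hβ1) hβ0
  have hg : Continuous fun τ : ℝ => (m : ℝ) * τ ^ (m - 1) := by fun_prop
  have hsign : ∀ t ∈ Ioo 0 T,
      β⁻¹ * expConv ((1 - β) / β) (fun τ => (m : ℝ) * τ ^ (m - 1)) t ≤ m * t ^ (m - 1) := by
    intro t ht
    have htm : t ≤ (m - 1 : ℕ) := by rw [Nat.cast_pred (Nat.pos_of_ne_zero hm)]; linarith [ht.2]
    calc β⁻¹ * expConv ((1 - β) / β) (fun τ => (m : ℝ) * τ ^ (m - 1)) t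
        = β⁻¹ * (m * expConv ((1 - β) / β) (fun τ => τ ^ (m - 1)) t) := by
          rw [expConv_const_mul]
      _ ≤ β⁻¹ * (m * (t ^ (m - 1) / ((1 - β) / β + 1))) := by
          gcongr
          exact expConv_pow_le hl.le ht.1 htm
      _ = m * t ^ (m - 1) := by
          field_simp
          ring
  simp_rw [cfD_eq_expConv]
  rw [setIntegral_Ioo_abs_sub_of_le hT0.le
      (((continuous_expConv hg _).intervalIntegrable 0 T).const_mul _) (hg.intervalIntegrable 0 T)
      hsign, integral_natCast_mul_pow_pred, intervalIntegral.integral_const_mul,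
    integral_expConv hg hl.ne', integral_natCast_mul_pow_pred, expConv_deriv_pow hm _ hT0,
    zero_pow hm]
  have : 1 - β ≠ 0 := (sub_pos.2 hβ1).ne'
  field_simp
  ring

theorem power_error_formulas_general (m : ℕ) (T : ℝ) (hT0 : 0 < T)
    (hTm : T ≤ (m : ℝ) - 1) (β : ℝ) (hβ : β ∈ Set.Ioo (0 : ℝ) 1) :
    (∫ t in Set.Ioo 0 T,
        |cfD 0 (1 - β) (fun τ => (m : ℝ) * τ ^ (m - 1)) t - (m : ℝ) * t ^ (m - 1)|) =
      (T ^ m / (1 - β)) * (Real.Gamma ((m : ℝ) + 1) *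
        mittagLeffler 1 ((m : ℝ) + 1) (-((1 - β) / β) * T) - β) ∧
    (∫ t in Set.Ioo 0 T,
        |caputoD 0 (1 - β) (fun τ => (m : ℝ) * τ ^ (m - 1)) t - (m : ℝ) * t ^ (m - 1)|) =
      T ^ m * (Real.Gamma ((m : ℝ) + β + 1) - Real.Gamma ((m : ℝ) + 1) * T ^ β) /
        Real.Gamma ((m : ℝ) + β + 1) :=
  ⟨integral_abs_cfD_sub_deriv_pow hβ.1 hβ.2 hT0 hTm,
    integral_abs_caputoD_sub_deriv_pow hβ.1 hβ.2 hT0 (by linarith [hβ.1])⟩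

/-- For `g(t) = t^m` on `[0,T]` (so `g'(t) = m t^{m-1}`), `m ≥ 2`,
`0 < T ≤ m-1`, `β ∈ (0,1)`: the explicit values of the Caputo–Fabrizio and
Caputo L¹ errors of order `1-β`. -/
theorem power_error_formulas (m : ℕ) (hm : 2 ≤ m) (T : ℝ) (hT0 : 0 < T)
    (hTm : T ≤ (m : ℝ) - 1) (β : ℝ) (hβ : β ∈ Set.Ioo (0 : ℝ) 1) :
    (∫ t in Set.Ioo 0 T,
        |cfD 0 (1 - β) (fun τ => (m : ℝ) * τ ^ (m - 1)) t - (m : ℝ) * t ^ (m - 1)|) =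
      (T ^ m / (1 - β)) * (Real.Gamma ((m : ℝ) + 1) *
        mittagLeffler 1 ((m : ℝ) + 1) (-((1 - β) / β) * T) - β) ∧
    (∫ t in Set.Ioo 0 T,
        |caputoD 0 (1 - β) (fun τ => (m : ℝ) * τ ^ (m - 1)) t - (m : ℝ) * t ^ (m - 1)|) =
      T ^ m * (Real.Gamma ((m : ℝ) + β + 1) - Real.Gamma ((m : ℝ) + 1) * T ^ β) /
        Real.Gamma ((m : ℝ) + β + 1) :=
  power_error_formulas_general m T hT0 hTm β hβ
end
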